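/- Suppose the extra data is a single point, i.e. X_ext consists of the single row x_extᵀ, with Π⊥_std x_ext ≠ 0 and x_extᵀ Π⊥_std θ⋆ ≠ 0. If (x_extᵀ Π⊥_std Σ Π⊥_std x_ext)/(x_extᵀ Π⊥_std x_ext) − 2 · ((Π⊥_std x_ext)ᵀ Σ Π⊥_std θ⋆)/(x_extᵀ Π⊥_std θ⋆) ≤ 0, then data augmentation does not increase the standard error: L_std(θ̂_aug) ≤ L_std(θ̂_std). -/

import Mathlib

open Matrix BigOperators

/-- Standard (population) error of `θ` w.r.t. covariance `S` and true parameter `θstar`: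
`(θ − θ⋆)ᵀ Σ (θ − θ⋆)`. -/
def Lstd {d : ℕ} (S : Matrix (Fin d) (Fin d) ℝ) (θstar θ : Fin d → ℝ) : ℝ :=
  (θ - θstar) ⬝ᵥ S.mulVec (θ - θstar)

/-- `θ` is the minimum Euclidean-norm solution of the constraint `C`. -/
def IsMinNormInterp {d : ℕ} (C : (Fin d → ℝ) → Prop) (θ : Fin d → ℝ) : Prop :=
  C θ ∧ ∀ θ', C θ' → θ ⬝ᵥ θ ≤ θ' ⬝ᵥ θ'

/-- `P` is the orthogonal projection matrix onto `Null(X)`: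
symmetric, idempotent, range contained in `Null(X)`, and fixing `Null(X)`. -/
def IsOrthProjNull {n d : ℕ} (X : Matrix (Fin n) (Fin d) ℝ)
    (P : Matrix (Fin d) (Fin d) ℝ) : Prop :=
  Pᵀ = P ∧ P * P = P ∧ (∀ v, X.mulVec (P.mulVec v) = 0) ∧
    (∀ v, X.mulVec v = 0 → P.mulVec v = v)

/-- `P` is the orthogonal projection matrix onto `Null(X1) ∩ Null(X2)`. -/
def IsOrthProjNull2 {n m d : ℕ} (X1 : Matrix (Fin n) (Fin d) ℝ)
    (X2 : Matrix (Fin m) (Fin d) ℝ) (P : Matrix (Fin d) (Fin d) ℝ) : Prop :=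
  Pᵀ = P ∧ P * P = P ∧ (∀ v, X1.mulVec (P.mulVec v) = 0 ∧ X2.mulVec (P.mulVec v) = 0) ∧
    (∀ v, X1.mulVec v = 0 → X2.mulVec v = 0 → P.mulVec v = v)

/-!
The min-norm interpolant of `X θ = X θ⋆` is `θ⋆ - Π⊥ θ⋆`, and adding the single constraint
`xᵀ θ = xᵀ θ⋆` moves it by `c • Π⊥ x` with `c = xᵀ Π⊥ θ⋆ / xᵀ Π⊥ x`. The error therefore changes
by `c² a - 2 c b = (xᵀ Π⊥ θ⋆)² / (xᵀ Π⊥ x) · (a / xᵀ Π⊥ x - 2 b / xᵀ Π⊥ θ⋆)`, where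
`a = (Π⊥ x)ᵀ Σ Π⊥ x` and `b = (Π⊥ x)ᵀ Σ Π⊥ θ⋆`; the ratio condition says exactly that this is `≤ 0`.
-/

theorem Matrix.IsSymm.mulVec_dotProduct {n α : Type*} [Fintype n] [CommSemiring α]
    {A : Matrix n n α} (hA : A.IsSymm) (u w : n → α) : A *ᵥ u ⬝ᵥ w = u ⬝ᵥ A *ᵥ w := by
  rw [← vecMul_transpose, hA.eq, dotProduct_mulVec]

section MinNorm

variable {d : ℕ} {C : (Fin d → ℝ) → Prop} {θ : Fin d → ℝ}

theorem IsMinNormInterp.dotProduct_eq_zero (h : IsMinNormInterp C θ) {v : Fin d → ℝ}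
    (hv : ∀ t : ℝ, C (θ + t • v)) : θ ⬝ᵥ v = 0 := by
  have hquad : ∀ t : ℝ, 0 ≤ (v ⬝ᵥ v) * (t * t) + 2 * (θ ⬝ᵥ v) * t + 0 := by
    intro t
    have hle := h.2 _ (hv t)
    simp only [dotProduct_add, add_dotProduct, dotProduct_smul, smul_dotProduct, smul_eq_mul,
      dotProduct_comm v θ] at hle
    linarith
  have hdisc : (2 * (θ ⬝ᵥ v)) ^ 2 ≤ 0 := by
    simpa [discrim] using discrim_le_zero hquad
  nlinarith [sq_nonneg (θ ⬝ᵥ v)]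

theorem IsMinNormInterp.eq_of_forall_dotProduct_eq_zero {M : Type*} [AddCommGroup M]
    [Module ℝ M] {f : (Fin d → ℝ) →ₗ[ℝ] M} {θ₀ θ' : Fin d → ℝ} (hC : ∀ θ, C θ ↔ f θ = f θ₀)
    (h : IsMinNormInterp C θ) (hθ' : f θ' = f θ₀) (horth : ∀ v, f v = 0 → θ' ⬝ᵥ v = 0) :
    θ = θ' := by
  have hθ : f θ = f θ₀ := (hC θ).1 h.1
  have hker : f (θ - θ') = 0 := by rw [map_sub, hθ, hθ', sub_self]
  have hθ_orth : θ ⬝ᵥ (θ - θ') = 0 :=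
    h.dotProduct_eq_zero fun t =>
      (hC _).2 (by rw [map_add, map_smul, hker, smul_zero, add_zero, hθ])
  have hself : (θ - θ') ⬝ᵥ (θ - θ') = 0 := by
    rw [sub_dotProduct, hθ_orth, horth _ hker, sub_zero]
  exact sub_eq_zero.mp (dotProduct_self_eq_zero.mp hself)

end MinNorm

namespace IsOrthProjNull

variable {n d : ℕ} {X : Matrix (Fin n) (Fin d) ℝ} {P : Matrix (Fin d) (Fin d) ℝ}

theorem isSymm (hP : IsOrthProjNull X P) : P.IsSymm := hP.1

theorem mulVec_mulVec_eq_zero (hP : IsOrthProjNull X P) (v : Fin d → ℝ) : X *ᵥ (P *ᵥ v) = 0 :=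
  hP.2.2.1 v

theorem mulVec_eq_self (hP : IsOrthProjNull X P) {v : Fin d → ℝ} (hv : X *ᵥ v = 0) :
    P *ᵥ v = v :=
  hP.2.2.2 v hv

theorem mulVec_mulVec_self (hP : IsOrthProjNull X P) (v : Fin d → ℝ) :
    P *ᵥ (P *ᵥ v) = P *ᵥ v := by
  rw [mulVec_mulVec, hP.2.1]

theorem mulVec_dotProduct_of_mulVec_eq_zero (hP : IsOrthProjNull X P) (u : Fin d → ℝ)
    {v : Fin d → ℝ} (hv : X *ᵥ v = 0) : P *ᵥ u ⬝ᵥ v = u ⬝ᵥ v := by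
  rw [hP.isSymm.mulVec_dotProduct, hP.mulVec_eq_self hv]

theorem dotProduct_mulVec_self (hP : IsOrthProjNull X P) (u : Fin d → ℝ) :
    u ⬝ᵥ P *ᵥ u = P *ᵥ u ⬝ᵥ P *ᵥ u := by
  rw [hP.isSymm.mulVec_dotProduct, hP.mulVec_mulVec_self]

theorem dotProduct_mulVec_self_nonneg (hP : IsOrthProjNull X P) (u : Fin d → ℝ) :
    0 ≤ u ⬝ᵥ P *ᵥ u := by
  rw [hP.dotProduct_mulVec_self]
  exact Fintype.sum_nonneg fun i => mul_self_nonneg _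

theorem sub_mulVec_dotProduct_eq_zero (hP : IsOrthProjNull X P) (θ₀ : Fin d → ℝ)
    {v : Fin d → ℝ} (hv : X *ᵥ v = 0) : (θ₀ - P *ᵥ θ₀) ⬝ᵥ v = 0 := by
  rw [sub_dotProduct, hP.mulVec_dotProduct_of_mulVec_eq_zero θ₀ hv, sub_self]

theorem mulVec_sub_mulVec (hP : IsOrthProjNull X P) (θ₀ : Fin d → ℝ) :
    X *ᵥ (θ₀ - P *ᵥ θ₀) = X *ᵥ θ₀ := by
  rw [mulVec_sub, hP.mulVec_mulVec_eq_zero, sub_zero]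

theorem isMinNormInterp_eq (hP : IsOrthProjNull X P) {θ₀ θ : Fin d → ℝ}
    (h : IsMinNormInterp (fun θ => X *ᵥ θ = X *ᵥ θ₀) θ) : θ = θ₀ - P *ᵥ θ₀ :=
  h.eq_of_forall_dotProduct_eq_zero (f := X.mulVecLin) (fun _ => Iff.rfl)
    (hP.mulVec_sub_mulVec θ₀) fun _ hv => hP.sub_mulVec_dotProduct_eq_zero θ₀ hv

theorem isMinNormInterp_augment_eq (hP : IsOrthProjNull X P) {x θ₀ θ : Fin d → ℝ}
    (h : IsMinNormInterp (fun θ => X *ᵥ θ = X *ᵥ θ₀ ∧ x ⬝ᵥ θ = x ⬝ᵥ θ₀) θ) :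
    θ = θ₀ - P *ᵥ θ₀ + ((x ⬝ᵥ P *ᵥ θ₀) / (x ⬝ᵥ P *ᵥ x)) • P *ᵥ x := by
  set c := (x ⬝ᵥ P *ᵥ θ₀) / (x ⬝ᵥ P *ᵥ x)
  -- if `xᵀ Π⊥ x = 0` then `Π⊥ x = 0`, so the numerator of `c` vanishes as well
  have hc : c * (x ⬝ᵥ P *ᵥ x) = x ⬝ᵥ P *ᵥ θ₀ := by
    by_cases hx : x ⬝ᵥ P *ᵥ x = 0
    · rw [hP.dotProduct_mulVec_self, dotProduct_self_eq_zero] at hx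
      rw [← hP.isSymm.mulVec_dotProduct x θ₀, hx, dotProduct_zero, zero_dotProduct, mul_zero]
    · exact div_mul_cancel₀ _ hx
  refine h.eq_of_forall_dotProduct_eq_zero
    (f := X.mulVecLin.prod (dotProductBilin ℝ ℝ x)) (fun _ => Prod.ext_iff.symm) ?_ ?_
  · refine Prod.ext ?_ ?_
    · show X *ᵥ (θ₀ - P *ᵥ θ₀ + c • P *ᵥ x) = X *ᵥ θ₀
      rw [mulVec_add, mulVec_smul, hP.mulVec_mulVec_eq_zero, smul_zero, add_zero,
        hP.mulVec_sub_mulVec]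
    · show x ⬝ᵥ (θ₀ - P *ᵥ θ₀ + c • P *ᵥ x) = x ⬝ᵥ θ₀
      rw [dotProduct_add, dotProduct_sub, dotProduct_smul, smul_eq_mul, hc, sub_add_cancel]
  · intro v hv
    have hXv : X *ᵥ v = 0 := congrArg Prod.fst hv
    have hxv : x ⬝ᵥ v = 0 := congrArg Prod.snd hv
    rw [add_dotProduct, hP.sub_mulVec_dotProduct_eq_zero θ₀ hXv, smul_dotProduct,
      hP.mulVec_dotProduct_of_mulVec_eq_zero x hXv, hxv, smul_zero, add_zero]

end IsOrthProjNull

theorem Lstd_add_smul {d : ℕ} {S : Matrix (Fin d) (Fin d) ℝ} (hS : S.IsSymm)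
    (θstar θ q : Fin d → ℝ) (c : ℝ) :
    Lstd S θstar (θ + c • q) =
      Lstd S θstar θ + 2 * c * (q ⬝ᵥ S *ᵥ (θ - θstar)) + c ^ 2 * (q ⬝ᵥ S *ᵥ q) := by
  unfold Lstd
  rw [add_sub_right_comm]
  simp only [mulVec_add, mulVec_smul, add_dotProduct, dotProduct_add, smul_dotProduct,
    dotProduct_smul, smul_eq_mul]
  rw [← hS.mulVec_dotProduct (θ - θstar) q, dotProduct_comm _ q]
  ring

theorem div_sq_mul_sub_two_mul_div_mul_nonpos {a b A B : ℝ} (hb : 0 ≤ b)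
    (h : A / b - 2 * (B / a) ≤ 0) : (a / b) ^ 2 * A - 2 * (a / b) * B ≤ 0 := by
  rcases eq_or_ne a 0 with rfl | ha
  · simp
  rcases eq_or_ne b 0 with rfl | hb0
  · simp
  have hfactor : (a / b) ^ 2 * A - 2 * (a / b) * B = a ^ 2 / b * (A / b - 2 * (B / a)) := by
    field_simp
  rw [hfactor]
  exact mul_nonpos_of_nonneg_of_nonpos (by positivity) h

theorem single_point_ratio_condition_safe_general {n d : ℕ}
    (Xstd : Matrix (Fin n) (Fin d) ℝ)
    (S : Matrix (Fin d) (Fin d) ℝ) (hS : S.PosSemidef)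
    (Pstd : Matrix (Fin d) (Fin d) ℝ) (hPstd : IsOrthProjNull Xstd Pstd)
    (xext : Fin d → ℝ) (θstar θstd θaug : Fin d → ℝ)
    (hcond :
      ((Pstd.mulVec xext) ⬝ᵥ S.mulVec (Pstd.mulVec xext)) / (xext ⬝ᵥ Pstd.mulVec xext) -
        2 * (((Pstd.mulVec xext) ⬝ᵥ S.mulVec (Pstd.mulVec θstar)) /
          (xext ⬝ᵥ Pstd.mulVec θstar)) ≤ 0)
    (hstd : IsMinNormInterp (fun θ => Xstd.mulVec θ = Xstd.mulVec θstar) θstd)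
    (haug : IsMinNormInterp
      (fun θ => Xstd.mulVec θ = Xstd.mulVec θstar ∧ xext ⬝ᵥ θ = xext ⬝ᵥ θstar) θaug) :
    Lstd S θstar θaug ≤ Lstd S θstar θstd := by
  obtain rfl := hPstd.isMinNormInterp_eq hstd
  obtain rfl := hPstd.isMinNormInterp_augment_eq haug
  rw [Lstd_add_smul (isHermitian_iff_isSymm.mp hS.isHermitian), sub_sub_cancel_left,
    mulVec_neg, dotProduct_neg]
  have hgain := div_sq_mul_sub_two_mul_div_mul_nonpos
    (hPstd.dotProduct_mulVec_self_nonneg xext) hcond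
  linarith

/-- Corollary characterization (a) of the paper: single-point augmentation does not
increase the standard error when the stated ratio condition holds. -/
theorem single_point_ratio_condition_safe {n d : ℕ}
    (Xstd : Matrix (Fin n) (Fin d) ℝ)
    (S : Matrix (Fin d) (Fin d) ℝ) (hS : S.PosSemidef)
    (Pstd : Matrix (Fin d) (Fin d) ℝ) (hPstd : IsOrthProjNull Xstd Pstd)
    (xext : Fin d → ℝ) (θstar θstd θaug : Fin d → ℝ)
    (hne : Pstd.mulVec xext ≠ 0)
    (hne' : xext ⬝ᵥ Pstd.mulVec θstar ≠ 0)
    (hcond :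
      ((Pstd.mulVec xext) ⬝ᵥ S.mulVec (Pstd.mulVec xext)) / (xext ⬝ᵥ Pstd.mulVec xext) -
        2 * (((Pstd.mulVec xext) ⬝ᵥ S.mulVec (Pstd.mulVec θstar)) /
          (xext ⬝ᵥ Pstd.mulVec θstar)) ≤ 0)
    (hstd : IsMinNormInterp (fun θ => Xstd.mulVec θ = Xstd.mulVec θstar) θstd)
    (haug : IsMinNormInterp
      (fun θ => Xstd.mulVec θ = Xstd.mulVec θstar ∧ xext ⬝ᵥ θ = xext ⬝ᵥ θstar) θaug) :
    Lstd S θstar θaug ≤ Lstd S θstar θstd :=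
  single_point_ratio_condition_safe_general Xstd S hS Pstd hPstd xext θstar θstd θaug hcond hstd
    haug
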